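/- arXiv:2405.04463 — 4 statements merged into one kernel-verified Lean document; each statement's English description precedes it below -/
import Mathlib

section
/- Let a, b, m_a, m_b ∈ (Fin l → {0,1}) be bitvectors over ℤ with masked representations a'ᵢ = m_{a,i} − 2aᵢm_{a,i}, b'ᵢ = m_{b,i} − 2bᵢm_{b,i}. Then 2·hd = ml − ⟨a', b'⟩, where hd = #{i : aᵢ ≠ bᵢ ∧ m_{a,i} = m_{b,i} = 1} is the masked Hamming distance and ml = #{i : m_{a,i} = m_{b,i} = 1} is the combined mask weight. -/
theorem masked_hamming_distance_eq (l : ℕ) (a b ma mb : Fin l → ℤ)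
    (ha : ∀ i, a i = 0 ∨ a i = 1) (hb : ∀ i, b i = 0 ∨ b i = 1)
    (hma : ∀ i, ma i = 0 ∨ ma i = 1) (hmb : ∀ i, mb i = 0 ∨ mb i = 1)
    (a' b' : Fin l → ℤ)
    (ha' : ∀ i, a' i = ma i - 2 * (a i * ma i))
    (hb' : ∀ i, b' i = mb i - 2 * (b i * mb i)) :
    2 * ((Finset.univ.filter (fun i => a i ≠ b i ∧ ma i = 1 ∧ mb i = 1)).card : ℤ) =
      ((Finset.univ.filter (fun i => ma i = 1 ∧ mb i = 1)).card : ℤ) -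
        ∑ i, a' i * b' i := by
  classical
  simp only [Finset.card_filter, Nat.cast_sum, Finset.mul_sum, ← Finset.sum_sub_distrib]
  apply Finset.sum_congr rfl
  intro i _
  rw [ha' i, hb' i]
  rcases ha i with h1 | h1 <;> rcases hb i with h2 | h2 <;>
    rcases hma i with h3 | h3 <;> rcases hmb i with h4 | h4 <;>
    simp [h1, h2, h3, h4]
end

section
/- Let t = 2^k, and let a, b, l be positive integers with a ≤ b, hd ∈ [−l, l] and ml ∈ [0, l] integers. If b·l < t/4, then the value a·ml − b·hd lies in the interval [−b·l, 2·b·l], and hd > (a/b)·ml holds if and only if the MSB of (a·ml − b·hd) mod t equals 1. -/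
theorem msb_comparison_shared_mask (k : ℕ) (a b l hd ml : ℤ)
    (ha : 0 < a) (hb : 0 < b) (hl : 0 < l) (hab : a ≤ b)
    (hhdl : -l ≤ hd) (hhdu : hd ≤ l) (hml0 : 0 ≤ ml) (hmll : ml ≤ l)
    (hbound : b * l < 2 ^ k / 4) :
    (-(b * l) ≤ a * ml - b * hd ∧ a * ml - b * hd ≤ 2 * (b * l)) ∧
      ((hd : ℚ) > (a : ℚ) / (b : ℚ) * (ml : ℚ) ↔
        (a * ml - b * hd) % 2 ^ k ≥ 2 ^ (k - 1)) := by
  have hbl : 1 ≤ b * l := mul_pos hb hl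
  have hk : 3 ≤ k := by
    by_contra h
    push_neg at h
    interval_cases k <;> omega
  -- set m = 2^(k-2)
  set m : ℤ := 2 ^ (k - 2) with hm
  have hkeq : (2 : ℤ) ^ k = 4 * m := by
    rw [hm]
    conv_lhs => rw [show k = k - 2 + 2 from by omega]
    rw [pow_add]; ring
  have hk1 : (2 : ℤ) ^ (k - 1) = 2 * m := by
    rw [hm]
    conv_lhs => rw [show k - 1 = k - 2 + 1 from by omega]
    rw [pow_add]; ring
  have hmpos : 0 < m := by positivity
  have hblm : b * l < m := by
    have : (2 : ℤ) ^ k / 4 = m := by rw [hkeq]; exact Int.mul_ediv_cancel_left m (by norm_num)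
    omega
  have h1 : 0 ≤ a * ml := mul_nonneg ha.le hml0
  have h2 : a * ml ≤ b * l := mul_le_mul hab hmll hml0 hb.le
  have h3 : b * hd ≤ b * l := mul_le_mul_of_nonneg_left hhdu hb.le
  have h4 : -(b * l) ≤ b * hd := by
    have := mul_le_mul_of_nonneg_left hhdl hb.le
    linarith [this]
  refine ⟨⟨by linarith, by linarith⟩, ?_⟩
  have hiff : ((hd : ℚ) > (a : ℚ) / (b : ℚ) * (ml : ℚ)) ↔ a * ml < b * hd := by
    rw [gt_iff_lt, div_mul_eq_mul_div, div_lt_iff₀ (by exact_mod_cast hb : (0:ℚ) < (b:ℚ))]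
    constructor
    · intro h
      have : (a : ℚ) * ml < b * hd := by push_cast at h ⊢; linarith
      exact_mod_cast this
    · intro h
      have : (a : ℚ) * ml < b * hd := by exact_mod_cast h
      push_cast at this ⊢; linarith
  rw [hiff, hk1]
  set x : ℤ := a * ml - b * hd with hx
  constructor
  · intro h
    have hxneg : x < 0 := by simp [hx]; linarith
    have hmod : x % 2 ^ k = x + 2 ^ k := by
      have he : (x + 2 ^ k) % 2 ^ k = x % 2 ^ k :=
        Int.add_mul_emod_self_left (a := x) (b := (2:ℤ) ^ k) (c := 1) ▸ by ring_nf
      rw [← he, Int.emod_eq_of_lt (by linarith) (by linarith)]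
    rw [hmod]
    linarith
  · intro h
    by_contra hc
    push_neg at hc
    have hxnn : 0 ≤ x := by simp [hx]; linarith
    have hmod : x % 2 ^ k = x := Int.emod_eq_of_lt hxnn (by linarith)
    rw [hmod] at h
    linarith
end

section
/- Let gᵢ = c_{2i} + c_{2i+1}X and hᵢ = d_{2i} + d_{2i+1}X in R = ℤ_{2^k}[X]/(X² − X − 1) for i = 0,…,n−1. Then the constant coefficient of ∑ᵢ gᵢ·hᵢ equals the dot product ∑_{j=0}^{2n−1} c_j·d_j of the full packed coefficient vectors in ℤ_{2^k}. -/
lemma sum_range_two_mul' {M : Type*} [AddCommMonoid M] (n : ℕ) (f : ℕ → M) :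
    ∑ j ∈ Finset.range (2 * n), f j = ∑ i ∈ Finset.range n, (f (2 * i) + f (2 * i + 1)) := by
  induction n with
  | zero => simp
  | succ m ih =>
    rw [Nat.mul_succ, Finset.sum_range_succ, Finset.sum_range_succ, Finset.sum_range_succ, ← ih]
    abel

open Polynomial in
theorem galois_ring_packed_dot_product (k n : ℕ) (hk : 1 ≤ k)
    (c d : ℕ → ZMod (2 ^ k)) :
    ∃ e₁ : ZMod (2 ^ k),
      Ideal.Quotient.mk (Ideal.span {(X : (ZMod (2 ^ k))[X]) ^ 2 - X - 1})
          (∑ i ∈ Finset.range n,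
            (C (c (2 * i)) + C (c (2 * i + 1)) * X) * (C (d (2 * i)) + C (d (2 * i + 1)) * X)) =
        Ideal.Quotient.mk (Ideal.span {(X : (ZMod (2 ^ k))[X]) ^ 2 - X - 1})
          (C (∑ j ∈ Finset.range (2 * n), c j * d j) + C e₁ * X) := by
  refine ⟨∑ i ∈ Finset.range n,
      (c (2 * i) * d (2 * i + 1) + c (2 * i + 1) * d (2 * i) +
        c (2 * i + 1) * d (2 * i + 1)), ?_⟩
  rw [Ideal.Quotient.eq, Ideal.mem_span_singleton]
  refine ⟨C (∑ i ∈ Finset.range n, c (2 * i + 1) * d (2 * i + 1)), ?_⟩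
  rw [sum_range_two_mul']
  simp only [map_sum, map_add, map_mul, Finset.sum_mul, Finset.mul_sum]
  rw [sub_add_eq_sub_sub, ← Finset.sum_sub_distrib, ← Finset.sum_sub_distrib]
  exact Finset.sum_congr rfl fun i _ => by ring
end

section
/- Let x, y, z be integers congruent mod 2^k to shares with x + y + z ≡ s (mod 2^k) where 0 ≤ x, y, z < 2^k, and let S = x + y + z as an integer (so 0 ≤ S < 3·2^k). Write b_k and b_{k+1} for bits k and k+1 of S. Then S − 2^k·b_k − 2^{k+1}·b_{k+1} ≡ s (mod 2^{k+m}) whenever 0 ≤ s < 2^k ≤ 2^{k+m} and s = S mod 2^k; i.e., subtracting the two overflow bits scaled by 2^k and 2^{k+1} from S yields the reduction of S modulo 2^k, viewed in ℤ_{2^{k+m}}. -/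
theorem share_lift_correct (k m : ℕ) (x y z s : ℤ)
    (hx : 0 ≤ x ∧ x < 2 ^ k) (hy : 0 ≤ y ∧ y < 2 ^ k) (hz : 0 ≤ z ∧ z < 2 ^ k)
    (hs : 0 ≤ s ∧ s < 2 ^ k)
    (hsum : x + y + z ≡ s [ZMOD 2 ^ k])
    (S bk bk1 : ℤ) (hS : S = x + y + z)
    (hbk : bk = S / 2 ^ k % 2) (hbk1 : bk1 = S / 2 ^ (k + 1) % 2) :
    S - 2 ^ k * bk - 2 ^ (k + 1) * bk1 ≡ s [ZMOD 2 ^ (k + m)] := by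
  have h2k : (0:ℤ) < 2 ^ k := by positivity
  set q : ℤ := S / 2 ^ k with hq
  have hq0 : 0 ≤ q := Int.ediv_nonneg (by omega) h2k.le
  have hq3 : q < 3 := by
    rw [hq, Int.ediv_lt_iff_lt_mul h2k]
    omega
  obtain ⟨n, hn⟩ : ∃ n : ℕ, S = (n : ℤ) :=
    ⟨S.toNat, (Int.toNat_of_nonneg (by omega)).symm⟩
  have hbk1' : bk1 = q / 2 % 2 := by
    have hnat : n / 2 ^ k / 2 = n / 2 ^ (k + 1) := by
      rw [Nat.div_div_eq_div_mul, pow_succ]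
    have hdd : S / 2 ^ k / 2 = S / 2 ^ (k + 1) := by
      rw [hn]; exact_mod_cast hnat
    rw [hbk1, ← hdd, ← hq]
  have hkey : 2 ^ k * bk + 2 ^ (k + 1) * bk1 = 2 ^ k * q := by
    have h : bk + 2 * bk1 = q := by omega
    rw [pow_succ]
    nlinarith [h]
  have hmod : S - 2 ^ k * bk - 2 ^ (k + 1) * bk1 = S % 2 ^ k := by
    rw [Int.emod_def, ← hq]
    linarith [hkey]
  have hSs : S % 2 ^ k = s := by
    have h1 : S % 2 ^ k = s % 2 ^ k := by rw [hS]; exact hsum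
    rw [h1, Int.emod_eq_of_lt hs.1 hs.2]
  have hfin : S - 2 ^ k * bk - 2 ^ (k + 1) * bk1 = s := by rw [hmod, hSs]
  simp [Int.ModEq, hfin]
end
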